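/- For partitions λ, μ of n, the value of the character Ind_{S_μ}^{S_n} 1 (induced from the trivial character of the Young subgroup S_λ = S_{λ₁} × S_{λ₂} × ⋯) at a permutation of cycle type μ equals the number of functions f from the set of parts of μ to the set of parts of λ such that for every part of λ of length k, the parts of μ mapped to it have total length k. -/

import Mathlib

open Equiv

/-- The full cycle type of a permutation of `Fin n`: the cycle lengths including
fixed points as cycles of length 1. -/
def fullCycleType {n : ℕ} (σ : Equiv.Perm (Fin n)) : Multiset ℕ :=
  σ.cycleType + Multiset.replicate (n - σ.cycleType.sum) 1

/-- The Young subgroup attached to a coloring `c : Fin n → ℕ`: the permutations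
preserving each fiber of `c`. -/
def youngSubgroup {n : ℕ} (c : Fin n → ℕ) : Subgroup (Equiv.Perm (Fin n)) where
  carrier := {σ | ∀ i, c (σ i) = c i}
  one_mem' := fun _ => rfl
  mul_mem' := by
    intro a b ha hb i
    simpa [Equiv.Perm.mul_apply, hb i] using ha (b i)
  inv_mem' := by
    intro a ha i
    simpa using (ha (a⁻¹ i)).symm

/-- The value at `x` of the character of `S_n` induced from the trivial character of
the Young subgroup of the coloring `c`, computed as
`|{k : k x k⁻¹ ∈ H}| / |H|` (the division is exact). -/
noncomputable def indYoungVal {n : ℕ} (c : Fin n → ℕ) (x : Equiv.Perm (Fin n)) : ℕ :=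
  Nat.card {k : Equiv.Perm (Fin n) // k * x * k⁻¹ ∈ youngSubgroup c} /
    Nat.card (youngSubgroup c)

/-- The number of row decompositions of `lam` by `mu`: functions from the parts of `mu`
to the parts of `lam` such that the parts mapped to a given part of `lam` of size `k`
have total size `k`. -/
noncomputable def rdCount (lam mu : Multiset ℕ) : ℕ :=
  Nat.card {f : Fin mu.toList.length → Fin lam.toList.length //
    ∀ j : Fin lam.toList.length,
      (∑ i ∈ Finset.univ.filter (fun i => f i = j), mu.toList.get i) = lam.toList.get j}

/-!
Regard `S_λ` as the stabilizer of the colouring `c` under precomposition. Then `k σ k⁻¹ ∈ S_λ`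
says that `c ∘ k` is constant on the cycles of `σ`, so by orbit–stabilizer the character value
counts the colourings in the orbit of `c` that are constant on the cycles of `σ`. Such a colouring
is a map from the cycles of `σ` (of lengths `μ`) to the colours (with class sizes `λ`); it lies in
the orbit of `c` exactly when its colour classes have the sizes of those of `c`, i.e. when the
cycles sent to each colour have total length equal to that colour's class size: a row
decomposition of `λ` by `μ`.
-/

open Finset MulAction

theorem Multiset.map_univ_eq_iff_card_filter_eq {α β γ : Type*} [Fintype α] [Fintype β]
    [DecidableEq γ] {f : α → γ} {g : β → γ} :
    univ.val.map f = univ.val.map g ↔ ∀ v, #{a | f a = v} = #{b | g b = v} := by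
  simp [Multiset.ext, Multiset.count_map, Finset.card_def, eq_comm]

theorem Multiset.map_univ_toList_get (m : Multiset ℕ) : univ.val.map m.toList.get = m := by
  rw [Fin.univ_val_map, List.ofFn_get, Multiset.coe_toList]

theorem Finset.card_filter_comp_eq_sum {α β γ : Type*} [Fintype α] [Fintype β] [DecidableEq β]
    [DecidableEq γ] (π : α → β) (F : β → γ) (v : γ) :
    #{a | F (π a) = v} = ∑ b with F b = v, #{a | π a = b} := by
  rw [card_eq_sum_card_fiberwise (f := π) (t := {b | F b = v}) fun a ha => by simpa using ha]
  refine sum_congr rfl fun b hb => ?_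
  rw [filter_filter]
  refine congrArg card (filter_congr fun a _ => and_iff_right_of_imp fun h => ?_)
  rw [h]
  exact (mem_filter.1 hb).2

theorem Fintype.exists_equiv_comp_eq_of_map_univ_eq {α β γ : Type*} [Fintype α] [Fintype β]
    {f : α → γ} {g : β → γ} (h : univ.val.map f = univ.val.map g) :
    ∃ e : α ≃ β, ∀ a, g (e a) = f a := by
  classical
  have hfiber (v : γ) : Fintype.card {a // f a = v} = Fintype.card {b // g b = v} := by
    simpa only [Fintype.card_subtype] using Multiset.map_univ_eq_iff_card_filter_eq.1 h v
  let e := (Equiv.sigmaFiberEquiv f).symm.trans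
    ((Equiv.sigmaCongrRight fun v => Fintype.equivOfCardEq (hfiber v)).trans
      (Equiv.sigmaFiberEquiv g))
  exact ⟨e, fun a => (Fintype.equivOfCardEq (hfiber (f a)) ⟨a, rfl⟩).2⟩

theorem MulAction.card_subtype_smul_eq {G X : Type*} [Group G] [MulAction G X] (x : X)
    (P : X → Prop) :
    Nat.card {g : G // P (g • x)} =
      Nat.card {y : orbit G x // P y} * Nat.card (stabilizer G x) := by
  rw [← Nat.card_prod]
  -- `(e g).1 = g • x` holds by `rfl`
  let e : G ≃ orbit G x × stabilizer G x :=
    Subgroup.groupEquivQuotientProdSubgroup.trans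
      ((orbitEquivQuotientStabilizer G x).symm.prodCongr (Equiv.refl _))
  exact Nat.card_congr ((e.subtypeEquiv fun _ => Iff.rfl).trans
    (Equiv.prodSubtypeFstEquivSubtypeProd (p := fun y : orbit G x => P y) (β := stabilizer G x)))

theorem DomMulAct.mem_orbit_perm_iff {α β : Type*} [Fintype α] {c d : α → β} :
    d ∈ orbit (Perm α)ᵈᵐᵃ c ↔ univ.val.map d = univ.val.map c := by
  constructor
  · rintro ⟨k, rfl⟩
    change univ.val.map (k • c) = _
    have hk : k • c = c ∘ (mk (M := Perm α)).symm k := funext fun _ => smul_apply ..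
    rw [hk, ← Multiset.map_map, Multiset.map_univ_val_equiv]
  · intro h
    obtain ⟨e, he⟩ := Fintype.exists_equiv_comp_eq_of_map_univ_eq h
    exact ⟨mk e, funext fun a => (smul_apply ..).trans (he a)⟩

abbrev RowDecomposition {α β : Type*} [Fintype α] [DecidableEq β] (wα : α → ℕ)
    (wβ : β → ℕ) : Type _ :=
  {f : α → β // ∀ b, ∑ a with f a = b, wα a = wβ b}

namespace RowDecomposition

variable {α α' β β' : Type*} [Fintype α] [Fintype α'] [DecidableEq β] [DecidableEq β']
  {wα : α → ℕ} {wα' : α' → ℕ} {wβ : β → ℕ} {wβ' : β' → ℕ}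

def congr (eα : α ≃ α') (eβ : β ≃ β') (hα : ∀ a, wα' (eα a) = wα a)
    (hβ : ∀ b, wβ' (eβ b) = wβ b) : RowDecomposition wα wβ ≃ RowDecomposition wα' wβ' where
  toFun f := ⟨eβ ∘ f.1 ∘ eα.symm, fun b' => by
    obtain ⟨b, rfl⟩ := eβ.surjective b'
    rw [hβ, ← f.2 b]
    refine sum_equiv eα.symm (by simp) fun a' _ => ?_
    rw [← hα, eα.apply_symm_apply]⟩
  invFun f := ⟨eβ.symm ∘ f.1 ∘ eα, fun b => by
    rw [← hβ, ← f.2 (eβ b)]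
    refine sum_equiv eα (by simp [Equiv.eq_symm_apply, eq_comm]) fun a _ => (hα a).symm⟩
  left_inv f := Subtype.ext <| funext fun a => by simp
  right_inv f := Subtype.ext <| funext fun a => by simp

def codRestrict (hα : ∀ a, 0 < wα a) (p : β → Prop) (hp : ∀ b, ¬ p b → wβ b = 0) :
    RowDecomposition wα wβ ≃ RowDecomposition wα (fun b : Subtype p => wβ b) where
  toFun f := ⟨fun a => ⟨f.1 a, by
      by_contra h
      have := f.2 (f.1 a)
      rw [hp _ h, sum_eq_zero_iff] at this
      exact (hα a).ne' (this a (by simp))⟩, fun b => by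
    simpa [Subtype.ext_iff] using f.2 b⟩
  invFun f := ⟨fun a => f.1 a, fun b => by
    by_cases hb : p b
    · simpa [Subtype.ext_iff] using f.2 ⟨b, hb⟩
    · rw [hp b hb, sum_eq_zero_iff]
      intro a ha
      exact absurd ((mem_filter.1 ha).2 ▸ (f.1 a).2) hb⟩
  left_inv f := rfl
  right_inv f := rfl

end RowDecomposition

namespace Equiv.Perm

theorem SameCycle.apply_eq_of_invariant {α γ : Type*} [Finite α] {σ : Perm α} {d : α → γ}
    (hd : ∀ i, d (σ i) = d i) {i j : α} (h : σ.SameCycle i j) : d i = d j := by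
  obtain ⟨k, -, rfl⟩ := h.exists_pow_eq'
  rw [coe_pow]
  simpa using ((Function.Semiconj.iterate_right (f := d) (gb := id) hd k) i).symm

variable {α : Type*} [Fintype α] [DecidableEq α] (σ : Perm α)

abbrev Cycles : Type _ := σ.cycleFactorsFinset ⊕ Function.fixedPoints σ

def cycleLength : σ.Cycles → ℕ
  | .inl g => #(g : Perm α).support
  | .inr _ => 1

def toCycles (i : α) : σ.Cycles :=
  if h : σ i = i then .inr ⟨i, h⟩
  else .inl ⟨σ.cycleOf i, cycleOf_mem_cycleFactorsFinset_iff.2 (mem_support.2 h)⟩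

variable {σ}

theorem toCycles_eq_inl_iff {i : α} {g : Perm α} (hg : g ∈ σ.cycleFactorsFinset) :
    σ.toCycles i = .inl ⟨g, hg⟩ ↔ i ∈ g.support := by
  unfold toCycles
  split_ifs with h
  · simp only [false_iff]
    exact fun hi => mem_support.1 (mem_cycleFactorsFinset_support_le hg hi) h
  · simp only [Sum.inl.injEq, Subtype.mk.injEq]
    constructor
    · rintro rfl
      exact mem_support_cycleOf_iff.2 ⟨SameCycle.refl _ _, mem_support.2 h⟩
    · exact fun hi => (cycle_is_cycleOf hi hg).symm

theorem toCycles_eq_inr_iff {i j : α} (hj : σ j = j) :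
    σ.toCycles i = .inr ⟨j, hj⟩ ↔ i = j := by
  unfold toCycles
  split_ifs with h
  · simp [Subtype.ext_iff]
  · simp only [false_iff]
    rintro rfl
    exact h hj

theorem toCycles_apply (i : α) : σ.toCycles (σ i) = σ.toCycles i := by
  by_cases h : σ i = i
  · rw [h]
  · have h' : σ (σ i) ≠ σ i := fun hh => h (σ.injective hh)
    unfold toCycles
    simp only [dif_neg h, dif_neg h', cycleOf_self_apply]

theorem toCycles_surjective : Function.Surjective σ.toCycles := by
  rintro (⟨g, hg⟩ | ⟨j, hj⟩)
  · obtain ⟨i, hi⟩ := (mem_cycleFactorsFinset_iff.1 hg).1.nonempty_support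
    exact ⟨i, (toCycles_eq_inl_iff hg).2 hi⟩
  · exact ⟨j, (toCycles_eq_inr_iff hj).2 rfl⟩

theorem sameCycle_of_toCycles_eq {i j : α} (h : σ.toCycles i = σ.toCycles j) :
    σ.SameCycle i j := by
  rcases ha : σ.toCycles j with ⟨g, hg⟩ | ⟨k, hk⟩ <;> rw [ha] at h
  · have hj := (toCycles_eq_inl_iff hg).1 ha
    rw [cycle_is_cycleOf ((toCycles_eq_inl_iff hg).1 h) hg] at hj
    exact (mem_support_cycleOf_iff.1 hj).1
  · rw [(toCycles_eq_inr_iff hk).1 h, (toCycles_eq_inr_iff hk).1 ha]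

theorem card_filter_toCycles (a : σ.Cycles) : #{i | σ.toCycles i = a} = σ.cycleLength a := by
  rcases a with ⟨g, hg⟩ | ⟨j, hj⟩
  · simp_rw [toCycles_eq_inl_iff hg, filter_univ_mem]
    rfl
  · simp_rw [toCycles_eq_inr_iff hj, filter_eq', if_pos (mem_univ j), card_singleton]
    rfl

theorem cycleLength_pos (a : σ.Cycles) : 0 < σ.cycleLength a := by
  rw [← card_filter_toCycles]
  obtain ⟨i, rfl⟩ := toCycles_surjective a
  exact card_pos.2 ⟨i, by simp⟩

variable (σ) in
theorem map_cycleLength_univ : univ.val.map σ.cycleLength = σ.partition.parts := by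
  rw [parts_partition, ← univ_disjSum_univ, val_disjSum, Multiset.disjSum, Multiset.map_add,
    Multiset.map_map, Multiset.map_map]
  congr 1
  · rw [univ_eq_attach, attach_val, cycleType_def]
    exact Multiset.attach_map_val' _ (card ∘ support)
  · rw [show σ.cycleLength ∘ Sum.inr = fun _ => 1 from rfl, Multiset.map_const', card_val,
      card_univ, card_fixedPoints, sum_cycleType]

variable (σ) in
noncomputable def invariantFunEquiv (γ : Type*) :
    {d : α → γ // ∀ i, d (σ i) = d i} ≃ (σ.Cycles → γ) where
  toFun d := d.1 ∘ Function.surjInv toCycles_surjective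
  invFun F := ⟨F ∘ σ.toCycles, fun i => congrArg F (toCycles_apply i)⟩
  left_inv d := Subtype.ext <| funext fun _ =>
    SameCycle.apply_eq_of_invariant d.2 (sameCycle_of_toCycles_eq (Function.surjInv_eq _ _))
  right_inv F := funext fun a => congrArg F (Function.surjInv_eq _ a)

variable (σ) in
theorem card_invariant_mem_orbit (c : α → ℕ) :
    Nat.card {d : orbit (Perm α)ᵈᵐᵃ c // ∀ i, d.1 (σ i) = d.1 i} =
      Nat.card (RowDecomposition σ.cycleLength fun v => #{i | c i = v}) := by
  refine Nat.card_congr <| (Equiv.subtypeSubtypeEquivSubtypeInter (· ∈ orbit (Perm α)ᵈᵐᵃ c)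
      fun d : α → ℕ => ∀ i, d (σ i) = d i).trans <|
    (Equiv.subtypeEquivRight fun d => ?_).trans <|
    (Equiv.subtypeSubtypeEquivSubtypeInter _
      fun d => univ.val.map d = univ.val.map c).symm.trans <|
    ((invariantFunEquiv σ ℕ).symm.subtypeEquiv fun F => Iff.rfl).symm.trans <|
    Equiv.subtypeEquivRight fun F => ?_
  · rw [DomMulAct.mem_orbit_perm_iff, and_comm]
  · rw [Multiset.map_univ_eq_iff_card_filter_eq]
    change (∀ v, #{i | F (σ.toCycles i) = v} = _) ↔ _
    refine forall_congr' fun v => ?_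
    rw [card_filter_comp_eq_sum σ.toCycles F, sum_congr rfl fun a _ => card_filter_toCycles a]

end Equiv.Perm

theorem fullCycleType_eq_parts_partition {n : ℕ} (σ : Perm (Fin n)) :
    fullCycleType σ = σ.partition.parts := by
  rw [fullCycleType, Perm.parts_partition, Fintype.card_fin, Perm.sum_cycleType]

section YoungSubgroup

variable {n : ℕ} (c : Fin n → ℕ)

theorem conj_mem_youngSubgroup_iff (σ k : Perm (Fin n)) :
    k * σ * k⁻¹ ∈ youngSubgroup c ↔ ∀ i, c (k (σ i)) = c (k i) :=
  ⟨fun h i => by simpa using h (k i), fun h i => by simpa using h (k⁻¹ i)⟩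

theorem card_stabilizer_eq_card_youngSubgroup :
    Nat.card (stabilizer (Perm (Fin n))ᵈᵐᵃ c) = Nat.card (youngSubgroup c) :=
  Nat.card_congr (DomMulAct.mk.subtypeEquiv fun k => by
    rw [mem_stabilizer_iff, funext_iff]; rfl).symm

theorem card_conj_mem_youngSubgroup (σ : Perm (Fin n)) :
    Nat.card {k // k * σ * k⁻¹ ∈ youngSubgroup c} =
      Nat.card (RowDecomposition σ.cycleLength fun v => #{i | c i = v}) *
        Nat.card (youngSubgroup c) := by
  rw [← σ.card_invariant_mem_orbit, ← card_stabilizer_eq_card_youngSubgroup,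
    ← card_subtype_smul_eq c fun d => ∀ i, d (σ i) = d i]
  exact Nat.card_congr (DomMulAct.mk.subtypeEquiv fun k => by
    simp [conj_mem_youngSubgroup_iff, DomMulAct.smul_apply])

theorem indYoungVal_eq_card_rowDecomposition (σ : Perm (Fin n)) :
    indYoungVal c σ =
      Nat.card (RowDecomposition σ.cycleLength fun v : univ.image c => #{i | c i = v}) := by
  rw [indYoungVal, card_conj_mem_youngSubgroup, Nat.mul_div_cancel _ Nat.card_pos]
  refine Nat.card_congr (RowDecomposition.codRestrict Perm.cycleLength_pos _ fun v hv => ?_)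
  simpa using hv

end YoungSubgroup

/-- For partitions `lam, mu` of `n`, the value of `Ind_{S_lam}^{S_n} 1` at a
permutation of cycle type `mu` equals the number of row decompositions of `lam` by `mu`. -/
theorem stmt_11 (n : ℕ) (lam mu : Nat.Partition n) (σ : Equiv.Perm (Fin n))
    (hσ : fullCycleType σ = mu.parts) (c : Fin n → ℕ)
    (hc : ((Finset.image c Finset.univ).val.map
        (fun v => (Finset.univ.filter (fun i => c i = v)).card)) = lam.parts) :
    indYoungVal c σ = rdCount lam.parts mu.parts := by
  obtain ⟨eCycles, heCycles⟩ := Fintype.exists_equiv_comp_eq_of_map_univ_eq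
    (f := mu.parts.toList.get) (g := σ.cycleLength) (by
      rw [Multiset.map_univ_toList_get, Perm.map_cycleLength_univ, ← hσ,
        fullCycleType_eq_parts_partition])
  obtain ⟨eColors, heColors⟩ := Fintype.exists_equiv_comp_eq_of_map_univ_eq
    (f := lam.parts.toList.get) (g := fun v : univ.image c => #{i | c i = v}) (by
      rw [Multiset.map_univ_toList_get, ← hc, univ_eq_attach, attach_val]
      exact (Multiset.attach_map_val' _ _).symm)
  rw [indYoungVal_eq_card_rowDecomposition]
  exact (Nat.card_congr (RowDecomposition.congr eCycles eColors heCycles heColors)).symm
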